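/- Let p, q be coprime with 0 < p < q, let t_{p/q} = ∑_{i=1}^q s_i 2^{-i} with s_i = ⌊(i+1)p/q⌋ - ⌊i p/q⌋, and let t⁻ = (2^q t_{p/q} - 1)/(2^q - 1) and t⁺ = 2^q t_{p/q}/(2^q - 1) be the endpoints of I_{p/q}. Then ∑_{i=0}^{q-1} {2^i t⁻} = ∑_{i=0}^{q-1} {2^i t⁺}, where {x} denotes the fractional part. -/

import Mathlib

noncomputable def tpq (p q : ℕ) : ℝ :=
  ∑ i ∈ Finset.Icc 1 q,
    ((⌊(((i + 1) * p : ℕ) : ℝ) / q⌋ - ⌊((i * p : ℕ) : ℝ) / q⌋ : ℤ) : ℝ) / 2 ^ i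

/-!
Put `N = 2^q t_{p/q} = ∑ s_i 2^{q-i} ∈ ℕ`, so that `t⁺ = N / (2^q - 1)` and `t⁻ = (N - 1) / (2^q - 1)`.
For `0 ≤ m < 2^q - 1`, multiplying `m / (2^q - 1)` by `2^i` modulo `1` rotates the `q`-bit string
of `m` cyclically by `i` places; summing over all `q` rotations, every bit of `m` lands once in
every position, so `∑_{i<q} {2^i m / (2^q - 1)}` is the number of ones among the `q` bits of `m`.
Since `s_q = 0` and `s_{q-1} = 1`, `N ≡ 2 (mod 4)`, and `N - 1` (ending in `01`) and `N`
(ending in `10`) have the same number of ones.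
-/

open Finset

def bitCount (q m : ℕ) : ℕ := ∑ j ∈ range q, m / 2 ^ j % 2

theorem bitCount_succ (q m : ℕ) : bitCount (q + 1) m = m % 2 + bitCount q (m / 2) := by
  rw [bitCount, bitCount, sum_range_succ', add_comm]
  congr 1
  · simp
  · refine sum_congr rfl fun j _ => ?_
    rw [pow_succ', Nat.div_div_eq_div_mul]

theorem bitCount_four_mul_add_one {q : ℕ} (hq : 2 ≤ q) (a : ℕ) :
    bitCount q (4 * a + 1) = bitCount q (4 * a + 2) := by
  obtain ⟨k, rfl⟩ : ∃ k, q = k + 2 := ⟨q - 2, by omega⟩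
  simp only [bitCount_succ, show (4 * a + 1) / 2 = 2 * a by omega,
    show (4 * a + 2) / 2 = 2 * a + 1 by omega, show (2 * a + 1) / 2 = a by omega,
    show 2 * a / 2 = a by omega]
  omega

theorem sum_range_two_pow (q : ℕ) : ∑ i ∈ range q, 2 ^ i = 2 ^ q - 1 := by
  simpa using Nat.geomSum_eq le_rfl q

theorem sum_two_pow_mul_bit (q m : ℕ) : ∑ j ∈ range q, 2 ^ j * (m / 2 ^ j % 2) = m % 2 ^ q := by
  induction q with
  | zero => simp [Nat.mod_one]
  | succ q ih => rw [sum_range_succ, ih, Nat.mod_pow_succ]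

theorem sum_range_add_mod {M : Type*} [AddCommMonoid M] (f : ℕ → M) (q i : ℕ) :
    ∑ j ∈ range q, f ((i + j) % q) = ∑ j ∈ range q, f j := by
  rcases Nat.eq_zero_or_pos q with rfl | hq
  · simp
  have : NeZero q := ⟨hq.ne'⟩
  rw [← Fin.sum_univ_eq_sum_range (fun j => f ((i + j) % q)), ← Fin.sum_univ_eq_sum_range f]
  exact Fintype.sum_equiv (Equiv.addLeft (Fin.ofNat q i)) _ _ fun j => by simp [Fin.val_add]

theorem two_pow_modEq_two_pow_mod (q a : ℕ) : 2 ^ a ≡ 2 ^ (a % q) [MOD 2 ^ q - 1] := by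
  have hq : 2 ^ q ≡ 1 [MOD 2 ^ q - 1] :=
    ((Nat.modEq_iff_dvd' Nat.one_le_two_pow).mpr dvd_rfl).symm
  conv_lhs => rw [← Nat.div_add_mod a q, pow_add, pow_mul]
  simpa using (hq.pow (a / q)).mul_right (2 ^ (a % q))

theorem two_pow_mul_mod_eq_sum_rotate {q m : ℕ} (hm : m < 2 ^ q - 1) (i : ℕ) :
    2 ^ i * m % (2 ^ q - 1) = ∑ j ∈ range q, 2 ^ ((i + j) % q) * (m / 2 ^ j % 2) := by
  have hbits : ∑ j ∈ range q, 2 ^ j * (m / 2 ^ j % 2) = m := by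
    rw [sum_two_pow_mul_bit, Nat.mod_eq_of_lt (by omega)]
  -- `m ≠ 2^q - 1` has a zero bit, so the rotated bit string is not all ones either
  obtain ⟨j₀, hj₀, hzero⟩ : ∃ j ∈ range q, m / 2 ^ j % 2 = 0 := by
    by_contra! hone
    have : m = 2 ^ q - 1 := by
      rw [← hbits, ← sum_range_two_pow]
      exact sum_congr rfl fun j hj => by rw [show m / 2 ^ j % 2 = 1 by grind, mul_one]
    omega
  have hlt : ∑ j ∈ range q, 2 ^ ((i + j) % q) * (m / 2 ^ j % 2) < 2 ^ q - 1 :=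
    calc ∑ j ∈ range q, 2 ^ ((i + j) % q) * (m / 2 ^ j % 2)
        < ∑ j ∈ range q, 2 ^ ((i + j) % q) :=
          sum_lt_sum (fun j _ => mul_le_of_le_one_right (Nat.zero_le _) (by omega))
            ⟨j₀, hj₀, by rw [hzero, mul_zero]; positivity⟩
      _ = 2 ^ q - 1 := by rw [sum_range_add_mod (2 ^ ·), sum_range_two_pow]
  have hcong : 2 ^ i * m ≡ ∑ j ∈ range q, 2 ^ ((i + j) % q) * (m / 2 ^ j % 2) [MOD 2 ^ q - 1] := by
    conv_lhs => rw [← hbits, mul_sum]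
    refine Nat.ModEq.sum fun j _ => ?_
    rw [← mul_assoc, ← pow_add]
    exact (two_pow_modEq_two_pow_mod q (i + j)).mul_right _
  rw [hcong, Nat.mod_eq_of_lt hlt]

theorem sum_two_pow_mul_mod {q m : ℕ} (hm : m < 2 ^ q - 1) :
    ∑ i ∈ range q, 2 ^ i * m % (2 ^ q - 1) = (2 ^ q - 1) * bitCount q m :=
  calc ∑ i ∈ range q, 2 ^ i * m % (2 ^ q - 1)
      = ∑ j ∈ range q, (∑ i ∈ range q, 2 ^ ((j + i) % q)) * (m / 2 ^ j % 2) := by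
        rw [sum_congr rfl fun i _ => two_pow_mul_mod_eq_sum_rotate hm i, sum_comm]
        refine sum_congr rfl fun j _ => ?_
        rw [sum_mul]
        exact sum_congr rfl fun i _ => by rw [add_comm]
    _ = (2 ^ q - 1) * bitCount q m := by
        have hrot (j : ℕ) : ∑ i ∈ range q, 2 ^ ((j + i) % q) = 2 ^ q - 1 :=
          (sum_range_add_mod (2 ^ ·) q j).trans (sum_range_two_pow q)
        simp_rw [hrot, bitCount, mul_sum]

theorem sum_fract_two_pow_mul_div {q m : ℕ} (hm : m < 2 ^ q - 1) :
    ∑ i ∈ range q, Int.fract ((2 : ℝ) ^ i * (m / (2 ^ q - 1))) = bitCount q m := by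
  have hM : ((2 ^ q - 1 : ℕ) : ℝ) = 2 ^ q - 1 := by
    rw [Nat.cast_sub Nat.one_le_two_pow]; push_cast; ring
  have hM0 : ((2 ^ q - 1 : ℕ) : ℝ) ≠ 0 := Nat.cast_ne_zero.mpr (by omega)
  calc ∑ i ∈ range q, Int.fract ((2 : ℝ) ^ i * (m / (2 ^ q - 1)))
      = ∑ i ∈ range q, ((2 ^ i * m % (2 ^ q - 1) : ℕ) : ℝ) / ((2 ^ q - 1 : ℕ) : ℝ) := by
        refine sum_congr rfl fun i _ => ?_
        rw [← Int.fract_div_natCast_eq_div_natCast_mod, hM]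
        push_cast; ring_nf
    _ = bitCount q m := by
        rw [← sum_div, ← Nat.cast_sum, sum_two_pow_mul_mod hm, Nat.cast_mul,
          mul_div_cancel_left₀ _ hM0]

def sturmDigit (p q i : ℕ) : ℕ := (i + 1) * p / q - i * p / q

theorem sturmDigit_le_one {p q : ℕ} (hpq : p ≤ q) (i : ℕ) : sturmDigit p q i ≤ 1 := by
  rcases Nat.eq_zero_or_pos q with rfl | hq
  · simp [sturmDigit]
  have : (i + 1) * p / q ≤ i * p / q + 1 :=
    calc (i + 1) * p / q ≤ (i * p + q) / q := Nat.div_le_div_right (by rw [add_mul]; omega)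
      _ = i * p / q + 1 := Nat.add_div_right _ hq
  unfold sturmDigit
  omega

theorem sturmDigit_self {p q : ℕ} (hpq : p < q) : sturmDigit p q q = 0 := by
  have hq : 0 < q := by omega
  rw [sturmDigit, add_mul, one_mul, add_comm, Nat.add_mul_div_left _ _ hq,
    Nat.div_eq_of_lt hpq, Nat.mul_div_cancel_left _ hq]
  omega

theorem sturmDigit_pred {p q : ℕ} (hp : 0 < p) (hpq : p ≤ q) : sturmDigit p q (q - 1) = 1 := by
  obtain ⟨p, rfl⟩ : ∃ p', p = p' + 1 := ⟨p - 1, by omega⟩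
  obtain ⟨r, rfl⟩ : ∃ r, q = p + 1 + r := ⟨q - (p + 1), by omega⟩
  have hdiv : (p + 1 + r - 1) * (p + 1) / (p + 1 + r) = p := by
    rw [show p + 1 + r - 1 = p + r by omega]
    exact Nat.div_eq_of_lt_le (by nlinarith) (by nlinarith)
  rw [sturmDigit, hdiv, Nat.sub_add_cancel (by omega), Nat.mul_div_cancel_left _ (by omega)]
  omega

theorem tpq_eq_sum_sturmDigit (p q : ℕ) :
    tpq p q = ∑ i ∈ Icc 1 q, (sturmDigit p q i : ℝ) / 2 ^ i := by
  refine sum_congr rfl fun i _ => ?_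
  have hmono : i * p / q ≤ (i + 1) * p / q := Nat.div_le_div_right (by gcongr; omega)
  rw [sturmDigit, Int.floor_div_natCast, Int.floor_div_natCast, Int.floor_natCast,
    Int.floor_natCast, ← Int.natCast_div, ← Int.natCast_div, Nat.cast_sub hmono]
  push_cast
  rfl

def tpqNumerator (p q : ℕ) : ℕ := ∑ j ∈ range q, sturmDigit p q (q - j) * 2 ^ j

theorem two_pow_mul_tpq (p q : ℕ) : 2 ^ q * tpq p q = tpqNumerator p q := by
  rw [tpq_eq_sum_sturmDigit, mul_sum, tpqNumerator, Nat.cast_sum]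
  refine sum_nbij' (q - ·) (q - ·) ?_ ?_ ?_ ?_ fun i hi => ?_
  any_goals intro i hi; simp only [mem_Icc, mem_range] at hi ⊢; omega
  rw [mem_Icc] at hi
  rw [Nat.sub_sub_self hi.2, show (2 : ℝ) ^ q = 2 ^ (q - i) * 2 ^ i by
    rw [← pow_add, Nat.sub_add_cancel hi.2]]
  push_cast
  field_simp

theorem tpqNumerator_lt {p q : ℕ} (hpq : p < q) : tpqNumerator p q < 2 ^ q - 1 :=
  calc tpqNumerator p q < ∑ j ∈ range q, 2 ^ j :=
        sum_lt_sum (fun j _ => mul_le_of_le_one_left (Nat.zero_le _) (sturmDigit_le_one hpq.le _))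
          ⟨0, mem_range.mpr (by omega), by simp [sturmDigit_self hpq]⟩
    _ = 2 ^ q - 1 := sum_range_two_pow q

theorem tpqNumerator_mod_four {p q : ℕ} (hp : 0 < p) (hpq : p < q) : tpqNumerator p q % 4 = 2 := by
  obtain ⟨k, rfl⟩ : ∃ k, q = k + 2 := ⟨q - 2, by omega⟩
  have h4 : 4 ∣ ∑ j ∈ range k, sturmDigit p (k + 2) (k + 2 - (j + 1 + 1)) * 2 ^ (j + 1 + 1) :=
    dvd_sum fun j _ => Dvd.dvd.mul_left ⟨2 ^ j, by ring⟩ _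
  have h1 : sturmDigit p (k + 2) (k + 2 - (0 + 1)) = 1 := sturmDigit_pred hp hpq.le
  rw [tpqNumerator, sum_range_succ', sum_range_succ', h1, Nat.sub_zero, sturmDigit_self hpq]
  omega

theorem stmt_5 (p q : ℕ) (hp : 0 < p) (hq : p < q) :
    ∑ i ∈ Finset.range q, Int.fract ((2 : ℝ) ^ i * ((2 ^ q * tpq p q - 1) / (2 ^ q - 1)))
      = ∑ i ∈ Finset.range q, Int.fract ((2 : ℝ) ^ i * (2 ^ q * tpq p q / (2 ^ q - 1))) := by
  obtain ⟨a, ha⟩ : ∃ a, tpqNumerator p q = 4 * a + 2 :=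
    ⟨tpqNumerator p q / 4, by have := tpqNumerator_mod_four hp hq; omega⟩
  have hlt : 4 * a + 2 < 2 ^ q - 1 := ha ▸ tpqNumerator_lt hq
  have hlower : (2 : ℝ) ^ q * tpq p q - 1 = ((4 * a + 1 : ℕ) : ℝ) := by
    rw [two_pow_mul_tpq, ha]; push_cast; ring
  rw [hlower, two_pow_mul_tpq, ha, sum_fract_two_pow_mul_div (by omega),
    sum_fract_two_pow_mul_div hlt, bitCount_four_mul_add_one (by omega)]
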